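/- arXiv:1807.04021 — 2 statements merged into one kernel-verified Lean document; each statement's English description precedes it below -/
import Mathlib

section
/- Let n ≥ 1, σ > 0, q(y|x) := exp(−‖y − x‖²/(2σ²)) for x, y ∈ ℝⁿ, and let P be a probability measure on ℝⁿ that is non-degenerate, i.e. P({x : ⟨x, v⟩ = d}) < 1 for every nonzero v ∈ ℝⁿ and every d ∈ ℝ. Then the conditional mean f_P(y) := (∫ x·q(y|x) dP(x)) / (∫ q(y|x) dP(x)) is an injective function of y ∈ ℝⁿ, and there exists a penalty φ_P : ℝⁿ → ℝ ∪ {+∞} such that for every y ∈ ℝⁿ, f_P(y) is the UNIQUE minimizer of x ↦ (1/2)‖y − x‖² + φ_P(x) over ℝⁿ. -/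
open MeasureTheory RealInnerProductSpace

/-- The conditional mean (MMSE estimator) for additive white Gaussian denoising
with noise variance `σ²` and prior `P` on `ℝⁿ`. -/
noncomputable def gaussMean (n : ℕ) (σ : ℝ) (P : Measure (EuclideanSpace ℝ (Fin n)))
    (y : EuclideanSpace ℝ (Fin n)) : EuclideanSpace ℝ (Fin n) :=
  (∫ x, Real.exp (-‖y - x‖ ^ 2 / (2 * σ ^ 2)) ∂P)⁻¹ •
    ∫ x, Real.exp (-‖y - x‖ ^ 2 / (2 * σ ^ 2)) • x ∂P

/-!
With `t = σ²`, the Gaussian kernel factors as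
`exp (-‖y - x‖² / 2t) = exp (-‖y‖² / 2t) * exp ((⟪y, x⟫ - ‖x‖² / 2) / t)`, so `f_P(y)` is the mean
of `P` tilted by the second factor, and it is the gradient of the log-partition function
`ψ(y) = t log ∫ exp ((⟪y, x⟫ - ‖x‖² / 2) / t) dP(x)` (Tweedie's formula). Jensen's inequality for
the tilted measure, in the form `exp s ≥ s + 1`, says that `f_P(y)` is a subgradient of `ψ` at `y`,
strictly so unless the tilted measure (equivalently `P`) sits on a hyperplane. Adding the strict
inequalities at two points with the same image gives `0 < 0`, hence injectivity. As `f_P` is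
continuous, `f_P(y)` is the only subgradient of `ψ` at `y`, and with `φ = ψ^* - ‖·‖² / 2` the
Fenchel–Young inequality, whose equality case is exactly subgradients, becomes the claim.
-/

section Subgradient

variable {E : Type*} [NormedAddCommGroup E] [InnerProductSpace ℝ E]

def HasSubgradientAt (ψ : E → ℝ) (g y : E) : Prop := ∀ z, ψ y + ⟪g, z - y⟫ ≤ ψ z

/-- `ψ^*(x) - ‖x‖² / 2`, where `ψ^*` is the convex conjugate of `ψ`. -/
noncomputable def conjugatePenalty (ψ : E → ℝ) (x : E) : EReal :=
  ⨆ z, ((⟪x, z⟫ - ψ z - 2⁻¹ * ‖x‖ ^ 2 : ℝ) : EReal)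

theorem add_conjugatePenalty_lt {ψ : E → ℝ} {g x y : E} (hg : HasSubgradientAt ψ g y)
    (hx : ¬ HasSubgradientAt ψ x y) :
    ((2⁻¹ * ‖y - g‖ ^ 2 : ℝ) : EReal) + conjugatePenalty ψ g <
      ((2⁻¹ * ‖y - x‖ ^ 2 : ℝ) : EReal) + conjugatePenalty ψ x := by
  have hg_val : conjugatePenalty ψ g = ((⟪g, y⟫ - ψ y - 2⁻¹ * ‖g‖ ^ 2 : ℝ) : EReal) := by
    refine le_antisymm (iSup_le fun z => EReal.coe_le_coe_iff.mpr ?_) (le_iSup_of_le y le_rfl)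
    have := hg z
    rw [inner_sub_right] at this
    linarith
  obtain ⟨z, hz⟩ : ∃ z, ψ z < ψ y + ⟪x, z - y⟫ := by
    simpa [HasSubgradientAt] using hx
  calc ((2⁻¹ * ‖y - g‖ ^ 2 : ℝ) : EReal) + conjugatePenalty ψ g
      = ((2⁻¹ * ‖y - g‖ ^ 2 + (⟪g, y⟫ - ψ y - 2⁻¹ * ‖g‖ ^ 2) : ℝ) : EReal) := by
        rw [hg_val, EReal.coe_add]
    _ < ((2⁻¹ * ‖y - x‖ ^ 2 + (⟪x, z⟫ - ψ z - 2⁻¹ * ‖x‖ ^ 2) : ℝ) : EReal) := by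
        rw [EReal.coe_lt_coe_iff, norm_sub_sq_real, norm_sub_sq_real, real_inner_comm y g]
        rw [inner_sub_right, real_inner_comm y x] at hz
        linarith
    _ ≤ ((2⁻¹ * ‖y - x‖ ^ 2 : ℝ) : EReal) + conjugatePenalty ψ x := by
        rw [EReal.coe_add]
        gcongr
        exact le_iSup_of_le z le_rfl

theorem HasSubgradientAt.eq_of_continuous {ψ : E → ℝ} {F : E → E} (hF : Continuous F)
    (hsub : ∀ y, HasSubgradientAt ψ (F y) y) {x y : E} (hx : HasSubgradientAt ψ x y) :
    x = F y := by
  have key : ∀ v, ⟪x - F y, v⟫ ≤ 0 := by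
    intro v
    -- monotonicity of the subdifferential between `y` and `y + s • v`, then `s → 0⁺`
    have hpos : ∀ s : ℝ, 0 < s → ⟪x - F (y + s • v), v⟫ ≤ 0 := by
      intro s hs
      have h₁ := hx (y + s • v)
      have h₂ := hsub (y + s • v) y
      rw [add_sub_cancel_left] at h₁
      rw [sub_add_cancel_left, inner_neg_right] at h₂
      rw [real_inner_smul_right] at h₁ h₂
      rw [inner_sub_left]
      nlinarith
    have hlim : Filter.Tendsto (fun s : ℝ => ⟪x - F (y + s • v), v⟫)
        (nhdsWithin 0 (Set.Ioi 0)) (nhds ⟪x - F y, v⟫) := by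
      have hc : Continuous fun s : ℝ => ⟪x - F (y + s • v), v⟫ := by fun_prop
      simpa using (hc.tendsto 0).mono_left nhdsWithin_le_nhds
    exact le_of_tendsto hlim (eventually_nhdsWithin_of_forall hpos)
  exact sub_eq_zero.mp (real_inner_self_nonpos.mp (key _))

end Subgradient

theorem continuous_integral_of_norm_le {X α G : Type*} [SeminormedAddCommGroup X]
    [TopologicalSpace α] [MeasurableSpace α] [OpensMeasurableSpace α] [SecondCountableTopology α]
    [NormedAddCommGroup G] [NormedSpace ℝ G] (μ : Measure α) [IsFiniteMeasure μ] {F : X → α → G}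
    (hF : Continuous fun p : X × α => F p.1 p.2) (B : ℝ → ℝ)
    (hB : ∀ R y x, ‖y‖ ≤ R → ‖F y x‖ ≤ B R) : Continuous fun y => ∫ x, F y x ∂μ := by
  refine continuous_iff_continuousAt.mpr fun y₀ => continuousAt_of_dominated
    (bound := fun _ => B (‖y₀‖ + 1)) ?_ ?_ (integrable_const _) ?_
  · exact .of_forall fun y => (hF.comp (Continuous.prodMk_right y)).aestronglyMeasurable
  · filter_upwards [(continuous_norm.tendsto y₀).eventually (gt_mem_nhds (lt_add_one ‖y₀‖))]
      with y hy
    exact .of_forall fun x => hB _ y x hy.le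
  · exact .of_forall fun x => (hF.comp (Continuous.prodMk_left x)).continuousAt

section GaussianTilt

variable {E : Type*} [NormedAddCommGroup E] [InnerProductSpace ℝ E]

noncomputable def gaussWeight (t : ℝ) (y x : E) : ℝ :=
  Real.exp ((⟪y, x⟫ - ‖x‖ ^ 2 / 2) / t)

theorem gaussWeight_pos (t : ℝ) (y x : E) : 0 < gaussWeight t y x := Real.exp_pos _

@[fun_prop]
theorem continuous_gaussWeight (t : ℝ) :
    Continuous fun p : E × E => gaussWeight t p.1 p.2 := by
  unfold gaussWeight
  fun_prop

theorem gaussWeight_eq_mul_exp (t : ℝ) (y z x : E) :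
    gaussWeight t z x = gaussWeight t y x * Real.exp (⟪z - y, x⟫ / t) := by
  rw [gaussWeight, gaussWeight, ← Real.exp_add, inner_sub_left]
  ring_nf

theorem gaussWeight_le {t R : ℝ} (ht : 0 < t) {y : E} (hy : ‖y‖ ≤ R) (x : E) :
    gaussWeight t y x ≤ Real.exp (R ^ 2 / 2 / t) := by
  refine Real.exp_le_exp.mpr (div_le_div_of_nonneg_right ?_ ht.le)
  have := (real_inner_le_norm y x).trans (mul_le_mul_of_nonneg_right hy (norm_nonneg x))
  nlinarith [sq_nonneg (R - ‖x‖)]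

theorem gaussWeight_mul_norm_le {t R : ℝ} (ht : 0 < t) {y : E} (hy : ‖y‖ ≤ R) (x : E) :
    gaussWeight t y x * ‖x‖ ≤ Real.exp ((R + t) ^ 2 / 2 / t) := by
  calc gaussWeight t y x * ‖x‖ ≤ gaussWeight t y x * Real.exp (t * ‖x‖ / t) := by
        refine mul_le_mul_of_nonneg_left ?_ (gaussWeight_pos t y x).le
        rw [mul_div_cancel_left₀ _ ht.ne']
        linarith [Real.add_one_le_exp ‖x‖]
    _ ≤ Real.exp ((R + t) ^ 2 / 2 / t) := by
        rw [gaussWeight, ← Real.exp_add, ← add_div]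
        refine Real.exp_le_exp.mpr (div_le_div_of_nonneg_right ?_ ht.le)
        have := (real_inner_le_norm y x).trans (mul_le_mul_of_nonneg_right hy (norm_nonneg x))
        nlinarith [sq_nonneg (R + t - ‖x‖)]

/-- At `m = ⟪posteriorMean t P y, z - y⟫`, the integral of this weighted slack in `exp s ≥ s + 1`
is the slack in the subgradient inequality of `logPartition t P` between `y` and `z`. -/
noncomputable def expTangentGap (t : ℝ) (y z : E) (m : ℝ) (x : E) : ℝ :=
  Real.exp (m / t) * gaussWeight t y x *
    (Real.exp ((⟪x, z - y⟫ - m) / t) - ((⟪x, z - y⟫ - m) / t + 1))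

theorem expTangentGap_eq (t : ℝ) (y z : E) (m : ℝ) (x : E) :
    expTangentGap t y z m x = gaussWeight t z x - Real.exp (m / t) *
      (gaussWeight t y x + (gaussWeight t y x * ⟪x, z - y⟫ - m * gaussWeight t y x) / t) := by
  rw [expTangentGap, gaussWeight_eq_mul_exp t y z x, real_inner_comm, sub_div, Real.exp_sub]
  field_simp
  ring

theorem expTangentGap_nonneg (t : ℝ) (y z : E) (m : ℝ) (x : E) :
    0 ≤ expTangentGap t y z m x :=
  mul_nonneg (mul_pos (Real.exp_pos _) (gaussWeight_pos t y x)).le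
    (sub_nonneg.mpr (Real.add_one_le_exp _))

theorem expTangentGap_pos {t : ℝ} (ht : t ≠ 0) {y z : E} {m : ℝ} {x : E}
    (hx : ⟪x, z - y⟫ ≠ m) : 0 < expTangentGap t y z m x :=
  mul_pos (mul_pos (Real.exp_pos _) (gaussWeight_pos t y x))
    (sub_pos.mpr (Real.add_one_lt_exp (div_ne_zero (sub_ne_zero.mpr hx) ht)))

variable [MeasurableSpace E] [BorelSpace E] (t : ℝ) (P : Measure E)

noncomputable def partitionFn (y : E) : ℝ := ∫ x, gaussWeight t y x ∂P

/-- The potential `ψ` whose gradient is the posterior mean (Tweedie's formula). -/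
noncomputable def logPartition (y : E) : ℝ := t * Real.log (partitionFn t P y)

noncomputable def posteriorMean (y : E) : E :=
  (partitionFn t P y)⁻¹ • ∫ x, gaussWeight t y x • x ∂P

variable {t} [IsFiniteMeasure P]

theorem integrable_gaussWeight (ht : 0 < t) (y : E) : Integrable (gaussWeight t y) P :=
  .of_bound (by fun_prop) _ (.of_forall fun x => by
    rw [Real.norm_of_nonneg (gaussWeight_pos t y x).le]
    exact gaussWeight_le ht le_rfl x)

theorem partitionFn_pos [NeZero P] (ht : 0 < t) (y : E) : 0 < partitionFn t P y := by
  rw [partitionFn, integral_pos_iff_support_of_nonneg (fun x => (gaussWeight_pos t y x).le)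
    (integrable_gaussWeight P ht y)]
  simpa [Function.support_eq_univ fun x => (gaussWeight_pos t y x).ne'] using NeZero.ne P

theorem logPartition_sub_sub_eq [NeZero P] (ht : 0 < t) (y z : E) (m : ℝ) :
    logPartition t P z - (logPartition t P y + m) =
      t * Real.log (partitionFn t P z / (Real.exp (m / t) * partitionFn t P y)) := by
  have hy := partitionFn_pos P ht y
  rw [logPartition, logPartition, Real.log_div (partitionFn_pos P ht z).ne' (by positivity),
    Real.log_mul (Real.exp_pos _).ne' hy.ne', Real.log_exp]
  field_simp
  ring

variable [SecondCountableTopology E]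

theorem integrable_gaussWeight_smul (ht : 0 < t) (y : E) :
    Integrable (fun x => gaussWeight t y x • x) P :=
  .of_bound (by fun_prop) _ (.of_forall fun x => by
    rw [norm_smul, Real.norm_of_nonneg (gaussWeight_pos t y x).le]
    exact gaussWeight_mul_norm_le ht le_rfl x)

theorem integrable_gaussWeight_mul_inner (ht : 0 < t) (y u : E) :
    Integrable (fun x => gaussWeight t y x * ⟪x, u⟫) P := by
  simpa [real_inner_smul_left] using (integrable_gaussWeight_smul P ht y).inner_const (𝕜 := ℝ) u

theorem integrable_expTangentGap (ht : 0 < t) (y z : E) (m : ℝ) :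
    Integrable (expTangentGap t y z m) P := by
  simp_rw [funext (expTangentGap_eq t y z m)]
  exact (integrable_gaussWeight P ht z).sub (((integrable_gaussWeight P ht y).add
    (((integrable_gaussWeight_mul_inner P ht y _).sub
      ((integrable_gaussWeight P ht y).const_mul m)).div_const t)).const_mul _)

variable [NeZero P]

theorem continuous_posteriorMean (ht : 0 < t) : Continuous (posteriorMean t P) := by
  have hS : Continuous (partitionFn t P) :=
    continuous_integral_of_norm_le P (continuous_gaussWeight t) _ fun R y x hy => by
      rw [Real.norm_of_nonneg (gaussWeight_pos t y x).le]
      exact gaussWeight_le ht hy x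
  have hM : Continuous fun y => ∫ x, gaussWeight t y x • x ∂P :=
    continuous_integral_of_norm_le P (by fun_prop) _ fun R y x hy => by
      rw [norm_smul, Real.norm_of_nonneg (gaussWeight_pos t y x).le]
      exact gaussWeight_mul_norm_le ht hy x
  exact (hS.inv₀ fun y => (partitionFn_pos P ht y).ne').smul hM

variable [CompleteSpace E]

theorem integral_gaussWeight_mul_inner (ht : 0 < t) (y u : E) :
    ∫ x, gaussWeight t y x * ⟪x, u⟫ ∂P = partitionFn t P y * ⟪posteriorMean t P y, u⟫ := by
  rw [posteriorMean, real_inner_smul_left, mul_inv_cancel_left₀ (partitionFn_pos P ht y).ne',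
    real_inner_comm, ← integral_inner (integrable_gaussWeight_smul P ht y)]
  simp_rw [real_inner_smul_right, real_inner_comm u]

theorem integral_expTangentGap (ht : 0 < t) (y z : E) :
    ∫ x, expTangentGap t y z ⟪posteriorMean t P y, z - y⟫ x ∂P = partitionFn t P z -
      Real.exp (⟪posteriorMean t P y, z - y⟫ / t) * partitionFn t P y := by
  set m := ⟪posteriorMean t P y, z - y⟫ with hm
  have hint : Integrable
      (fun x => (gaussWeight t y x * ⟪x, z - y⟫ - m * gaussWeight t y x) / t) P :=
    ((integrable_gaussWeight_mul_inner P ht y _).sub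
      ((integrable_gaussWeight P ht y).const_mul m)).div_const t
  simp_rw [expTangentGap_eq t y z m]
  rw [integral_sub (integrable_gaussWeight P ht z), integral_const_mul,
    integral_add (integrable_gaussWeight P ht y) hint, integral_div,
    integral_sub (integrable_gaussWeight_mul_inner P ht y _)
      ((integrable_gaussWeight P ht y).const_mul m),
    integral_const_mul, integral_gaussWeight_mul_inner P ht, ← hm, partitionFn, partitionFn]
  · ring
  · exact ((integrable_gaussWeight P ht y).add hint).const_mul _

theorem hasSubgradientAt_posteriorMean (ht : 0 < t) (y : E) :
    HasSubgradientAt (logPartition t P) (posteriorMean t P y) y := by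
  intro z
  set m := ⟪posteriorMean t P y, z - y⟫
  have hgap : 0 ≤ partitionFn t P z - Real.exp (m / t) * partitionFn t P y := by
    rw [← integral_expTangentGap P ht]
    exact integral_nonneg (expTangentGap_nonneg t y z m)
  have hratio : 1 ≤ partitionFn t P z / (Real.exp (m / t) * partitionFn t P y) := by
    rw [one_le_div (by have := partitionFn_pos P ht y; positivity)]
    linarith
  have := logPartition_sub_sub_eq P ht y z m
  nlinarith [Real.log_nonneg hratio]

theorem logPartition_add_inner_lt (ht : 0 < t) {y z : E}
    (hP : ∀ d, ¬ ∀ᵐ x ∂P, ⟪x, z - y⟫ = d) :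
    logPartition t P y + ⟪posteriorMean t P y, z - y⟫ < logPartition t P z := by
  set m := ⟪posteriorMean t P y, z - y⟫
  have hgap : 0 < partitionFn t P z - Real.exp (m / t) * partitionFn t P y := by
    rw [← integral_expTangentGap P ht, integral_pos_iff_support_of_nonneg
      (expTangentGap_nonneg t y z m) (integrable_expTangentGap P ht y z m)]
    exact (pos_iff_ne_zero.mpr (ae_iff.not.mp (hP m))).trans_le
      (measure_mono fun x hx => (expTangentGap_pos ht.ne' hx).ne')
  have hratio : 1 < partitionFn t P z / (Real.exp (m / t) * partitionFn t P y) := by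
    rw [one_lt_div (by have := partitionFn_pos P ht y; positivity)]
    linarith
  have := logPartition_sub_sub_eq P ht y z m
  nlinarith [Real.log_pos hratio]

theorem posteriorMean_injective (ht : 0 < t) (hP : ∀ v ≠ 0, ∀ d, ¬ ∀ᵐ x ∂P, ⟪x, v⟫ = d) :
    Function.Injective (posteriorMean t P) := by
  intro y z hyz
  by_contra hne
  have h₁ := logPartition_add_inner_lt P ht (hP (z - y) (sub_ne_zero.mpr (Ne.symm hne)))
  have h₂ := logPartition_add_inner_lt P ht (hP (y - z) (sub_ne_zero.mpr hne))
  rw [← hyz, ← neg_sub z y, inner_neg_right] at h₂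
  linarith

end GaussianTilt

theorem gaussMean_eq_posteriorMean (n : ℕ) (σ : ℝ) (P : Measure (EuclideanSpace ℝ (Fin n))) :
    gaussMean n σ P = posteriorMean (σ ^ 2) P := by
  ext1 y
  have hkernel : ∀ x : EuclideanSpace ℝ (Fin n), Real.exp (-‖y - x‖ ^ 2 / (2 * σ ^ 2)) =
      Real.exp (-‖y‖ ^ 2 / (2 * σ ^ 2)) * gaussWeight (σ ^ 2) y x := by
    intro x
    rw [gaussWeight, ← Real.exp_add, norm_sub_sq_real]
    ring_nf
  simp_rw [gaussMean, hkernel, mul_smul]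
  rw [integral_const_mul, integral_smul, smul_smul, mul_inv_rev, mul_assoc,
    inv_mul_cancel₀ (Real.exp_pos _).ne', mul_one, posteriorMean, partitionFn]

theorem stmt3_general (n : ℕ) (σ : ℝ) (hσ : 0 < σ)
    (P : Measure (EuclideanSpace ℝ (Fin n))) [IsProbabilityMeasure P]
    (hnd : ∀ v : EuclideanSpace ℝ (Fin n), v ≠ 0 → ∀ d : ℝ, P {x | ⟪x, v⟫ = d} < 1) :
    Function.Injective (gaussMean n σ P) ∧
    (∃ φ : EuclideanSpace ℝ (Fin n) → EReal, ∀ y x : EuclideanSpace ℝ (Fin n),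
      x ≠ gaussMean n σ P y →
      ((2⁻¹ * ‖y - gaussMean n σ P y‖ ^ 2 : ℝ) : EReal) + φ (gaussMean n σ P y) <
        ((2⁻¹ * ‖y - x‖ ^ 2 : ℝ) : EReal) + φ x) := by
  have ht : 0 < σ ^ 2 := by positivity
  have hsub := hasSubgradientAt_posteriorMean P ht
  rw [gaussMean_eq_posteriorMean]
  refine ⟨posteriorMean_injective P ht fun v hv d hae => ?_,
    conjugatePenalty (logPartition (σ ^ 2) P), fun y x hx => ?_⟩
  · have hmeas : MeasurableSet {x | ⟪x, v⟫ = d} :=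
      measurableSet_eq_fun (by fun_prop) measurable_const
    exact (hnd v hv d).ne <|
      ((ae_iff_measure_eq hmeas.nullMeasurableSet).mp hae).trans measure_univ
  · exact add_conjugatePenalty_lt (hsub y)
      fun h => hx (h.eq_of_continuous (continuous_posteriorMean P ht) hsub)

/-- For additive white Gaussian denoising with a non-degenerate prior `P` on `ℝⁿ` (no affine
hyperplane has full mass), the MMSE estimator is injective and there is a penalty `φ` such that
`f_P(y)` is the unique minimizer of `x ↦ (1/2)‖y − x‖² + φ(x)` for every `y`. -/
theorem stmt3 (n : ℕ) (hn : 1 ≤ n) (σ : ℝ) (hσ : 0 < σ)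
    (P : Measure (EuclideanSpace ℝ (Fin n))) [IsProbabilityMeasure P]
    (hnd : ∀ v : EuclideanSpace ℝ (Fin n), v ≠ 0 → ∀ d : ℝ, P {x | ⟪x, v⟫ = d} < 1) :
    Function.Injective (gaussMean n σ P) ∧
    (∃ φ : EuclideanSpace ℝ (Fin n) → EReal, ∀ y x : EuclideanSpace ℝ (Fin n),
      x ≠ gaussMean n σ P y →
      ((2⁻¹ * ‖y - gaussMean n σ P y‖ ^ 2 : ℝ) : EReal) + φ (gaussMean n σ P y) <
        ((2⁻¹ * ‖y - x‖ ^ 2 : ℝ) : EReal) + φ x) :=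
  stmt3_general n σ hσ P hnd
end

section
/- Let H be a real vector space (in particular a real Hilbert space) and let Z ⊆ H be a set of affine dimension at least two, i.e. there is no pair z₁, z₂ ∈ H with Z ⊆ {t·z₁ + (1−t)·z₂ : t ∈ ℝ}. Suppose θ : Z → H satisfies: for all z, z' ∈ Z there exists a scalar c(z, z') ∈ ℝ with θ(z) − θ(z') = c(z, z')·(z − z'). Then there exists a single scalar c ∈ ℝ such that θ(z) − θ(z') = c·(z − z') for all z, z' ∈ Z. -/
private lemma indep_aux {H : Type*} [AddCommGroup H] [Module ℝ H] {z z' w : H}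
    (hne : z ≠ z') (hw : ∀ t : ℝ, w ≠ t • z + (1 - t) • z') {a b : ℝ}
    (h : a • (z - z') + b • (z - w) = 0) : a = 0 ∧ b = 0 := by
  have hb : b = 0 := by
    by_contra hb
    apply hw (1 + a / b)
    have h2 : (b : ℝ) • w = (a + b) • z + (-a) • z' := by
      linear_combination (norm := module) -h
    have h3 : (b : ℝ) • ((1 + a / b) • z + (1 - (1 + a / b)) • z') =
        (a + b) • z + (-a) • z' := by
      match_scalars <;> field_simp <;> ring
    exact smul_right_injective H hb (h2.trans h3.symm)
  subst hb
  simp only [zero_smul, add_zero] at h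
  have : z - z' ≠ 0 := sub_ne_zero.mpr hne
  rcases smul_eq_zero.mp h with h | h
  · exact ⟨h, rfl⟩
  · exact absurd h this

private lemma tri {H : Type*} [AddCommGroup H] [Module ℝ H] (θ : H → H) {p q r : H}
    {c₁ c₂ c₃ : ℝ} (hpq : p ≠ q) (hr : ∀ t : ℝ, r ≠ t • p + (1 - t) • q)
    (h1 : θ p - θ q = c₁ • (p - q))
    (h2 : θ p - θ r = c₂ • (p - r))
    (h3 : θ q - θ r = c₃ • (q - r)) : c₁ = c₂ := by
  have key : (c₃ - c₁) • (p - q) + (c₂ - c₃) • (p - r) = 0 := by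
    linear_combination (norm := module) h1 + h3 - h2
  obtain ⟨e1, e2⟩ := indep_aux hpq hr key
  have f1 := sub_eq_zero.mp e1
  have f2 := sub_eq_zero.mp e2
  linarith

/-- Affine-geometric lemma: if `Z` has affine dimension at least two (it is not contained in
any affine line) and `θ : Z → H` satisfies `θ(z) − θ(z') = c(z,z')·(z − z')` with pointwise
scalars, then a single scalar works for all pairs. -/
theorem stmt11 {H : Type*} [AddCommGroup H] [Module ℝ H] (Z : Set H)
    (hZ : ∀ z₁ z₂ : H, ¬ Z ⊆ Set.range fun t : ℝ => t • z₁ + (1 - t) • z₂)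
    (θ : H → H)
    (hθ : ∀ z ∈ Z, ∀ z' ∈ Z, ∃ c : ℝ, θ z - θ z' = c • (z - z')) :
    ∃ c : ℝ, ∀ z ∈ Z, ∀ z' ∈ Z, θ z - θ z' = c • (z - z') := by
  classical
  obtain ⟨a, haZ, -⟩ := Set.not_subset.mp (hZ 0 0)
  obtain ⟨b, hbZ, hbl⟩ := Set.not_subset.mp (hZ a a)
  have hab : a ≠ b := by
    rintro rfl
    exact hbl ⟨1, by simp⟩
  obtain ⟨w, hwZ, hwl⟩ := Set.not_subset.mp (hZ a b)
  have hwl' : ∀ t : ℝ, w ≠ t • a + (1 - t) • b := by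
    intro t ht; exact hwl ⟨t, ht.symm⟩
  obtain ⟨c₀, hc₀⟩ := hθ a haZ b hbZ
  obtain ⟨cw, hcw⟩ := hθ a haZ w hwZ
  obtain ⟨cbw, hcbw⟩ := hθ b hbZ w hwZ
  have hc0w : c₀ = cw := tri θ hab hwl' hc₀ hcw hcbw
  have main : ∀ z ∈ Z, θ z - θ a = c₀ • (z - a) := by
    intro z hz
    by_cases hza : z = a
    · subst hza; simp
    by_cases hline : ∃ t : ℝ, z = t • a + (1 - t) • b
    · -- z on the line through a and b, z ≠ a; then w is not on the line through a and z
      obtain ⟨t, ht⟩ := hline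
      have ht1 : t ≠ 1 := by
        rintro rfl; simp at ht; exact hza ht
      have hw' : ∀ s : ℝ, w ≠ s • a + (1 - s) • z := by
        intro s hs
        apply hwl' (s + t - s * t)
        rw [hs, ht]
        module
      obtain ⟨cz, hcz⟩ := hθ a haZ z hz
      obtain ⟨czw, hczw⟩ := hθ z hz w hwZ
      have hzw : cz = cw := tri θ (fun h => hza h.symm) hw' hcz hcw hczw
      have hcz0 : cz = c₀ := by rw [hzw, hc0w]
      rw [hcz0] at hcz
      linear_combination (norm := module) -hcz
    · push_neg at hline
      have hw'' : ∀ s : ℝ, z ≠ s • a + (1 - s) • b := by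
        intro s hs; exact hline s hs
      obtain ⟨cz, hcz⟩ := hθ a haZ z hz
      obtain ⟨cbz, hcbz⟩ := hθ b hbZ z hz
      have hcz0 : c₀ = cz := tri θ hab hw'' hc₀ hcz hcbz
      rw [← hcz0] at hcz
      linear_combination (norm := module) -hcz
  refine ⟨c₀, fun z hz z' hz' => ?_⟩
  have h1 := main z hz
  have h2 := main z' hz'
  linear_combination (norm := module) h1 - h2
end
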